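/- Suppose f ∈ H^1 on the unit circle (f ≠ 0) factors as f = B g² with B a Blaschke product and g ∈ H^1, and suppose z^{-k} f(z) ≥ 0 a.e. on the circle for a nonnegative integer k. Then conj(g) = B g z^{-k} a.e. on the circle, and consequently both g and Bg are polynomials of degree at most k. -/

import Mathlib

open MeasureTheory Complex Real AddCircle
open scoped Real ENNReal ComplexConjugate BigOperators

noncomputable section

instance : Fact (0 < 2 * π) := ⟨by positivity⟩

/-- Normalized Haar measure on the circle `AddCircle (2π)`. -/
abbrev circleMeasure : Measure (AddCircle (2 * π)) := haarAddCircle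

/-!
Since `‖B‖ = 1`, the nonnegative number `z^{-k} B g²` equals its modulus `‖g‖² = g conj g`;
cancelling `g` where it does not vanish gives `conj g = B g z^{-k}`. In Fourier coefficients this
reads `(Bg)^(n + k) = conj ĝ(-n)`, which sends the frequencies above `k` of each of `g`, `Bg` to
negative frequencies of the other. Both lie in `H²`: `g` because `‖g‖² = ‖f‖`, and `Bg` because
(by Parseval) a product of two `H²` functions has no negative frequencies.
-/

open Filter

theorem Complex.conj_eq_mul_of_mul_sq_eq_nonneg {a w : ℂ} (ha : ‖a‖ = 1) {c : ℝ} (hc : 0 ≤ c)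
    (h : a * w ^ 2 = c) : conj w = a * w := by
  rcases eq_or_ne w 0 with rfl | hw
  · simp
  have hc_eq : (c : ℂ) = w * conj w := by
    rw [mul_conj, normSq_eq_norm_sq, ← abs_of_nonneg hc, ← Real.norm_eq_abs, ← norm_real,
      ← h, norm_mul, ha, one_mul, norm_pow]
  refine mul_left_cancel₀ hw ?_
  rw [← hc_eq, ← h]
  ring

namespace AddCircle

variable {T : ℝ} [Fact (0 < T)]

theorem fourierCoeff_conj (φ : AddCircle T → ℂ) (n : ℤ) :
    fourierCoeff (fun t => conj (φ t)) n = conj (fourierCoeff φ (-n)) := by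
  simp only [fourierCoeff, smul_eq_mul, ← integral_conj, map_mul, ← fourier_neg, neg_neg]

theorem fourierCoeff_mul_fourier (φ : AddCircle T → ℂ) (m n : ℤ) :
    fourierCoeff (fun t => φ t * fourier m t) n = fourierCoeff φ (n - m) := by
  refine integral_congr_ae (Eventually.of_forall fun t => ?_)
  dsimp only
  rw [smul_eq_mul, smul_eq_mul, show -(n - m) = -n + m by ring, fourier_add]
  ring

theorem _root_.MeasureTheory.MemLp.mul_fourier {p : ℝ≥0∞} {φ : AddCircle T → ℂ}
    (hφ : MemLp φ p haarAddCircle) (m : ℤ) :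
    MemLp (fun t => φ t * fourier m t) p haarAddCircle :=
  hφ.congr_norm (hφ.1.mul (map_continuous (fourier m)).aestronglyMeasurable)
    (Eventually.of_forall fun t => by rw [norm_mul, fourier_apply, Circle.norm_coe, mul_one])

theorem integral_conj_mul_eq_tsum_fourierCoeff {φ ψ : AddCircle T → ℂ}
    (hφ : MemLp φ 2 haarAddCircle) (hψ : MemLp ψ 2 haarAddCircle) :
    ∫ t, conj (φ t) * ψ t ∂haarAddCircle
      = ∑' i : ℤ, conj (fourierCoeff φ i) * fourierCoeff ψ i := by
  have repr_toLp {χ : AddCircle T → ℂ} (hχ : MemLp χ 2 haarAddCircle) (i : ℤ) :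
      fourierBasis.repr (hχ.toLp χ) i = fourierCoeff χ i := by
    rw [fourierBasis_repr, fourierCoeff_congr_ae hχ.coeFn_toLp]
  calc ∫ t, conj (φ t) * ψ t ∂haarAddCircle
      = inner ℂ (hφ.toLp φ) (hψ.toLp ψ) := by
        rw [L2.inner_def]
        refine integral_congr_ae ?_
        filter_upwards [hφ.coeFn_toLp, hψ.coeFn_toLp] with t hφt hψt
        rw [RCLike.inner_apply, hφt, hψt, mul_comm]
    _ = ∑' i : ℤ, conj (fourierCoeff φ i) * fourierCoeff ψ i := by
        rw [← fourierBasis.tsum_inner_mul_inner]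
        refine tsum_congr fun i => ?_
        rw [← inner_conj_symm, ← fourierBasis.repr_apply_apply, ← fourierBasis.repr_apply_apply,
          repr_toLp, repr_toLp]

theorem fourierCoeff_mul_eq_zero_of_neg {φ ψ : AddCircle T → ℂ}
    (hφ : MemLp φ 2 haarAddCircle) (hψ : MemLp ψ 2 haarAddCircle)
    (hφH : ∀ n : ℤ, n < 0 → fourierCoeff φ n = 0)
    (hψH : ∀ n : ℤ, n < 0 → fourierCoeff ψ n = 0) :
    ∀ n : ℤ, n < 0 → fourierCoeff (fun t => φ t * ψ t) n = 0 := by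
  intro n hn
  have hφc : MemLp (fun t => conj (φ t)) 2 haarAddCircle := hφ.star
  have hcoeff : fourierCoeff (fun t => φ t * ψ t) n
      = ∫ t, conj (conj (φ t)) * (ψ t * fourier (-n) t) ∂haarAddCircle := by
    refine integral_congr_ae (Eventually.of_forall fun t => ?_)
    simp only [smul_eq_mul, conj_conj]
    ring
  rw [hcoeff, integral_conj_mul_eq_tsum_fourierCoeff hφc (hψ.mul_fourier (-n))]
  refine (tsum_congr fun i => ?_).trans tsum_zero
  simp only [fourierCoeff_conj, fourierCoeff_mul_fourier, conj_conj]
  rcases le_or_gt i 0 with hi | hi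
  · rw [hψH _ (by omega), mul_zero]
  · rw [hφH _ (by omega), zero_mul]

theorem fourierCoeff_eq_zero_of_lt_of_conj_ae_eq {φ ψ : AddCircle T → ℂ} {k : ℤ}
    (hφH : ∀ n : ℤ, n < 0 → fourierCoeff φ n = 0)
    (hψH : ∀ n : ℤ, n < 0 → fourierCoeff ψ n = 0)
    (h : ∀ᵐ t ∂haarAddCircle, conj (φ t) = ψ t * conj (fourier k t)) :
    (∀ n : ℤ, k < n → fourierCoeff φ n = 0) ∧ (∀ n : ℤ, k < n → fourierCoeff ψ n = 0) := by
  have hrel (n : ℤ) : fourierCoeff ψ (n + k) = conj (fourierCoeff φ (-n)) := by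
    have h' : (fun t => conj (φ t)) =ᵐ[haarAddCircle] fun t => ψ t * fourier (-k) t :=
      h.mono fun t ht => by dsimp only; rw [ht, fourier_neg]
    rw [← fourierCoeff_conj, fourierCoeff_congr_ae h', fourierCoeff_mul_fourier, sub_neg_eq_add]
  constructor
  · intro n hn
    have h' := hrel (-n)
    rwa [neg_neg, hψH _ (by omega), eq_comm, map_eq_zero] at h'
  · intro n hn
    have h' := hrel (n - k)
    rwa [sub_add_cancel, hφH _ (by omega), map_zero] at h'

theorem ae_eq_sum_fourierCoeff_of_fourierCoeff_eq_zero {φ : AddCircle T → ℂ}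
    (hφ : MemLp φ 2 haarAddCircle) (s : Finset ℤ) (hs : ∀ n ∉ s, fourierCoeff φ n = 0) :
    φ =ᵐ[haarAddCircle] fun t => ∑ n ∈ s, fourierCoeff φ n * fourier n t := by
  have hseries : HasSum (fun n => fourierCoeff φ n • fourierLp (T := T) 2 n) (hφ.toLp φ) := by
    simpa only [fourierCoeff_congr_ae hφ.coeFn_toLp] using hasSum_fourier_series_L2 (hφ.toLp φ)
  have hfinite : HasSum (fun n => fourierCoeff φ n • fourierLp (T := T) 2 n)
      (∑ n ∈ s, fourierCoeff φ n • fourierLp 2 n) :=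
    hasSum_sum_of_ne_finset_zero fun n hn => by rw [hs n hn, zero_smul]
  have htoLp : hφ.toLp φ
      = ContinuousMap.toLp 2 haarAddCircle ℂ (∑ n ∈ s, fourierCoeff φ n • fourier n) := by
    rw [hseries.unique hfinite, map_sum]
    simp only [map_smul]
  filter_upwards [hφ.coeFn_toLp, ContinuousMap.coeFn_toLp (p := 2) (𝕜 := ℂ) haarAddCircle
    (∑ n ∈ s, fourierCoeff φ n • fourier n)] with t hφt hsumt
  rw [← hφt, htoLp, hsumt, ContinuousMap.sum_apply]
  rfl

theorem exists_ae_eq_sum_fourier_of_fourierCoeff_eq_zero {φ : AddCircle T → ℂ} (k : ℕ)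
    (hφ : MemLp φ 2 haarAddCircle) (hφH : ∀ n : ℤ, n < 0 → fourierCoeff φ n = 0)
    (hφk : ∀ n : ℤ, (k : ℤ) < n → fourierCoeff φ n = 0) :
    ∃ c : Fin (k + 1) → ℂ, ∀ᵐ t ∂haarAddCircle, φ t = ∑ j, c j * fourier (j : ℤ) t := by
  let s : Finset ℤ :=
    (Finset.univ : Finset (Fin (k + 1))).map (Fin.valEmbedding.trans Nat.castEmbedding)
  have hs (n : ℤ) (hn : n ∉ s) : fourierCoeff φ n = 0 := by
    rcases lt_or_ge n 0 with hn0 | hn0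
    · exact hφH n hn0
    refine hφk n (not_le.1 fun hnk => hn ?_)
    exact Finset.mem_map.2 ⟨⟨n.toNat, by omega⟩, Finset.mem_univ _, Int.toNat_of_nonneg hn0⟩
  refine ⟨fun j => fourierCoeff φ j, ?_⟩
  filter_upwards [ae_eq_sum_fourierCoeff_of_fourierCoeff_eq_zero hφ s hs] with t ht
  rw [ht, Finset.sum_map]
  rfl

end AddCircle

theorem stmt11_general (k : ℕ) (f g B : AddCircle (2 * π) → ℂ)
    (hf1 : Integrable f circleMeasure) (hg1 : Integrable g circleMeasure)
    (hgH : ∀ n : ℤ, n < 0 → fourierCoeff g n = 0)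
    (hBmeas : AEStronglyMeasurable B circleMeasure)
    (hBmod : ∀ᵐ z ∂circleMeasure, ‖B z‖ = 1)
    (hBH : ∀ n : ℤ, n < 0 → fourierCoeff B n = 0)
    (hfac : ∀ᵐ z ∂circleMeasure, f z = B z * (g z) ^ 2)
    (hpos : ∀ᵐ z ∂circleMeasure, ∃ c : ℝ, 0 ≤ c ∧
      conj (fourier (k : ℤ) z) * f z = (c : ℂ)) :
    (∀ᵐ z ∂circleMeasure, conj (g z) = B z * g z * conj (fourier (k : ℤ) z))
      ∧ (∃ c : Fin (k + 1) → ℂ,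
          ∀ᵐ z ∂circleMeasure, g z = ∑ j, c j * fourier (j : ℤ) z)
      ∧ (∃ d : Fin (k + 1) → ℂ,
          ∀ᵐ z ∂circleMeasure, B z * g z = ∑ j, d j * fourier (j : ℤ) z) := by
  have hg2 : MemLp g 2 circleMeasure := by
    refine (memLp_two_iff_integrable_sq_norm hg1.1).2 (hf1.norm.congr ?_)
    filter_upwards [hfac, hBmod] with z hfz hBz
    rw [hfz, norm_mul, hBz, one_mul, norm_pow]
  have hB2 : MemLp B 2 circleMeasure := .of_bound hBmeas 1 (hBmod.mono fun z hz => hz.le)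
  have hBg2 : MemLp (fun z => B z * g z) 2 circleMeasure :=
    hg2.congr_norm (hBmeas.mul hg1.1) (hBmod.mono fun z hz => by rw [norm_mul, hz, one_mul])
  have hconj : ∀ᵐ z ∂circleMeasure, conj (g z) = B z * g z * conj (fourier (k : ℤ) z) := by
    filter_upwards [hfac, hBmod, hpos] with z hfz hBz ⟨c, hc, hcf⟩
    have hnorm : ‖B z * conj (fourier (k : ℤ) z)‖ = 1 := by
      rw [norm_mul, hBz, RCLike.norm_conj, fourier_apply, Circle.norm_coe, one_mul]
    rw [conj_eq_mul_of_mul_sq_eq_nonneg hnorm hc (by rw [← hcf, hfz]; ring)]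
    ring
  have hBgH := fourierCoeff_mul_eq_zero_of_neg hB2 hg2 hBH hgH
  obtain ⟨hgk, hBgk⟩ := fourierCoeff_eq_zero_of_lt_of_conj_ae_eq hgH hBgH hconj
  exact ⟨hconj, exists_ae_eq_sum_fourier_of_fourierCoeff_eq_zero k hg2 hgH hgk,
    exists_ae_eq_sum_fourier_of_fourierCoeff_eq_zero k hBg2 hBgH hBgk⟩

/-- Suppose `f ∈ H¹` on the circle, `f ≠ 0`, factors as `f = B g²` with
`B` an inner function (in particular a Blaschke product: `|B| = 1` a.e. and
`spec B ⊆ [0,∞)`) and `g ∈ H¹`, and suppose `z^{-k} f(z) ≥ 0` a.e. on the circle. Then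
`conj g = B g z^{-k}` a.e., and consequently both `g` and `B g` are (a.e. equal to)
polynomials of degree at most `k`. -/
theorem stmt11 (k : ℕ) (f g B : AddCircle (2 * π) → ℂ)
    (hf1 : Integrable f circleMeasure) (hg1 : Integrable g circleMeasure)
    (hfH : ∀ n : ℤ, n < 0 → fourierCoeff f n = 0)
    (hgH : ∀ n : ℤ, n < 0 → fourierCoeff g n = 0)
    (hBmeas : AEStronglyMeasurable B circleMeasure)
    (hBmod : ∀ᵐ z ∂circleMeasure, ‖B z‖ = 1)
    (hBH : ∀ n : ℤ, n < 0 → fourierCoeff B n = 0)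
    (hfac : ∀ᵐ z ∂circleMeasure, f z = B z * (g z) ^ 2)
    (hf0 : ¬ (∀ᵐ z ∂circleMeasure, f z = 0))
    (hpos : ∀ᵐ z ∂circleMeasure, ∃ c : ℝ, 0 ≤ c ∧
      conj (fourier (k : ℤ) z) * f z = (c : ℂ)) :
    (∀ᵐ z ∂circleMeasure, conj (g z) = B z * g z * conj (fourier (k : ℤ) z))
      ∧ (∃ c : Fin (k + 1) → ℂ,
          ∀ᵐ z ∂circleMeasure, g z = ∑ j, c j * fourier (j : ℤ) z)
      ∧ (∃ d : Fin (k + 1) → ℂ,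
          ∀ᵐ z ∂circleMeasure, B z * g z = ∑ j, d j * fourier (j : ℤ) z) :=
  stmt11_general k f g B hf1 hg1 hgH hBmeas hBmod hBH hfac hpos
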